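/- The affine (1,1)-clans are exactly: the sequence with (c₁,c₂) = (+,−), the sequence with (c₁,c₂) = (−,+), and for each k ∈ ℤ the sequence determined by (c₁,c₂) = (1, 1+2k). In particular, the set of equivalence classes of affine (1,1)-clans is countably infinite, in bijection with ℤ ⊔ {two points}. -/

import Mathlib

noncomputable section

/-- An entry of a clan: `Sum.inl m` is the integer label `m`, `Sum.inr true` is `+`,
and `Sum.inr false` is `−`. -/
abbrev ClanEntry := ℤ ⊕ Bool

/-- An affine `(p,q)`-clan. -/
def IsAffineClan (p q : ℕ) (c : ℤ → ClanEntry) : Prop :=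
  (∀ i k m : ℤ, c i = Sum.inl m → c (i + k * (p + q)) = Sum.inl (m + k * (p + q))) ∧
  (∀ (i : ℤ) (s : Bool), c i = Sum.inr s → c (i + (p + q)) = Sum.inr s) ∧
  ((((Finset.Icc (1 : ℤ) (p + q)).filter fun i => c i = Sum.inr true).card : ℤ) -
      (((Finset.Icc (1 : ℤ) (p + q)).filter fun i => c i = Sum.inr false).card : ℤ) =
    (p : ℤ) - (q : ℤ)) ∧
  (∀ m i : ℤ, c i = Sum.inl m →
    ∃ j : ℤ, j ≠ i ∧ c j = Sum.inl m ∧ ∀ k : ℤ, c k = Sum.inl m → k = i ∨ k = j)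

/-- Equivalence of clans: same positions of `+`, same positions of `−`, and the same
pairs of positions carrying equal integer labels. -/
def ClanEquiv (c d : ℤ → ClanEntry) : Prop :=
  (∀ i, c i = Sum.inr true ↔ d i = Sum.inr true) ∧
  (∀ i, c i = Sum.inr false ↔ d i = Sum.inr false) ∧
  (∀ i j, i ≠ j →
    ((∃ m, c i = Sum.inl m ∧ c j = Sum.inl m) ↔ (∃ m, d i = Sum.inl m ∧ d j = Sum.inl m)))

/-- The affine `(1,1)`-clan with `(c₁, c₂) = (+, −)`. -/
def clanPM : ℤ → ClanEntry := fun i => if i % 2 = 1 then Sum.inr true else Sum.inr false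

/-- The affine `(1,1)`-clan with `(c₁, c₂) = (−, +)`. -/
def clanMP : ℤ → ClanEntry := fun i => if i % 2 = 1 then Sum.inr false else Sum.inr true

/-- The affine `(1,1)`-clan with `(c₁, c₂) = (1, 1 + 2k)`. -/
def clanZ (k : ℤ) : ℤ → ClanEntry :=
  fun i => if i % 2 = 1 then Sum.inl i else Sum.inl (i - 1 + 2 * k)

/-! Periodicity gives `c (i + n) = c i` shifted by `n`, so an affine `(1,1)`-clan is determined
by `(c 1, c 2)`. The balance condition leaves either two opposite signs, giving `(+,−)` or
`(−,+)`, or two integer labels `m₁, m₂`. In the latter case the partner `j` of position `1` cannot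
be odd (odd positions carry the distinct labels `m₁ + j - 1`), so `m₂ + j - 2 = m₁` makes
`m₂ - m₁ = 2k` even, and relabelling by `m₁ - 1` turns `c` into `clanZ k`. The representatives
are told apart by the entry at position `1`, and `clanZ k` by the partner `2 - 2k` of position `1`.
-/

def ClanEntry.shift : ClanEntry → ℤ → ClanEntry
  | .inl m, d => .inl (m + d)
  | .inr s, _ => .inr s

namespace ClanEntry

@[simp]
theorem shift_inl (m d : ℤ) : shift (.inl m) d = .inl (m + d) := rfl

@[simp]
theorem shift_inr (s : Bool) (d : ℤ) : shift (.inr s) d = .inr s := rfl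

@[simp]
theorem shift_zero (e : ClanEntry) : e.shift 0 = e := by
  cases e <;> simp

theorem shift_shift (e : ClanEntry) (a b : ℤ) : (e.shift a).shift b = e.shift (a + b) := by
  cases e <;> simp [add_assoc]

end ClanEntry

open ClanEntry

theorem clanEquiv_refl (c : ℤ → ClanEntry) : ClanEquiv c c :=
  ⟨fun _ => .rfl, fun _ => .rfl, fun _ _ _ => .rfl⟩

theorem clanEquiv_shift (c : ℤ → ClanEntry) (d : ℤ) : ClanEquiv (fun i => (c i).shift d) c := by
  refine ⟨fun i => ?_, fun i => ?_, fun i j _ => ?_⟩ <;> dsimp only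
  · cases c i <;> simp
  · cases c i <;> simp
  · cases c i <;> cases c j <;> simp

theorem apply_add_mul_eq_shift {c : ℤ → ClanEntry} {n : ℤ}
    (hc : ∀ i, c (i + n) = (c i).shift n) (i k : ℤ) :
    c (i + k * n) = (c i).shift (k * n) := by
  induction k using Int.induction_on with
  | zero => simp
  | succ k ih => rw [add_mul, one_mul, ← add_assoc, hc, ih, shift_shift]
  | pred k ih =>
    have hstep := hc (i + (-k - 1) * n)
    rw [show i + (-k - 1) * n + n = i + -k * n by ring, ih] at hstep
    calc c (i + (-k - 1) * n)
        = ((c (i + (-k - 1) * n)).shift n).shift (-n) := by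
          rw [shift_shift, add_neg_cancel, shift_zero]
      _ = (c i).shift ((-k - 1) * n) := by rw [← hstep, shift_shift]; ring_nf

theorem Icc_one_one_add_one : Finset.Icc (1 : ℤ) ((1 : ℕ) + (1 : ℕ)) = {1, 2} := by
  decide

namespace IsAffineClan

variable {p q : ℕ} {c : ℤ → ClanEntry}

theorem apply_add_eq_shift (h : IsAffineClan p q c) (i : ℤ) :
    c (i + (p + q)) = (c i).shift (p + q) := by
  cases hi : c i with
  | inl m => simpa using h.1 i 1 m hi
  | inr s => simpa using h.2.1 i s hi

theorem apply_eq_shift_of_dvd (h : IsAffineClan p q c) {i r : ℤ} (hd : (p + q : ℤ) ∣ i - r) :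
    c i = (c r).shift (i - r) := by
  obtain ⟨k, hk⟩ := hd
  rw [show i = r + k * (p + q) by linarith, add_sub_cancel_left]
  exact apply_add_mul_eq_shift h.apply_add_eq_shift r k

theorem one_one_apply (h : IsAffineClan 1 1 c) (i : ℤ) :
    c i = if i % 2 = 1 then (c 1).shift (i - 1) else (c 2).shift (i - 2) := by
  split_ifs <;> exact h.apply_eq_shift_of_dvd (by norm_num; omega)

theorem one_one_cases (h : IsAffineClan 1 1 c) :
    (c 1 = .inr true ∧ c 2 = .inr false) ∨ (c 1 = .inr false ∧ c 2 = .inr true) ∨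
      ∃ m₁ m₂, c 1 = .inl m₁ ∧ c 2 = .inl m₂ := by
  have hbal := h.2.2.1
  rw [Icc_one_one_add_one] at hbal
  rcases h₁ : c 1 with m₁ | _ | _ <;> rcases h₂ : c 2 with m₂ | _ | _ <;>
    simp_all [Finset.filter_insert, Finset.filter_singleton]

theorem one_one_eq_shift_clanZ (h : IsAffineClan 1 1 c) {m₁ m₂ : ℤ}
    (h₁ : c 1 = .inl m₁) (h₂ : c 2 = .inl m₂) :
    ∃ k, c = fun i => (clanZ k i).shift (m₁ - 1) := by
  obtain ⟨j, hj1, hj, -⟩ := h.2.2.2 m₁ 1 h₁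
  rw [h.one_one_apply j, h₁, h₂] at hj
  have hj_even : ¬ j % 2 = 1 := fun hodd => by simp [hodd] at hj; omega
  simp only [hj_even, if_false, shift_inl, Sum.inl.injEq] at hj
  refine ⟨(m₂ - m₁) / 2, funext fun i => ?_⟩
  rw [h.one_one_apply i, h₁, h₂, clanZ]
  split_ifs <;> simp only [shift_inl, Sum.inl.injEq] <;> omega

theorem one_one_classification (h : IsAffineClan 1 1 c) :
    ClanEquiv c clanPM ∨ ClanEquiv c clanMP ∨ ∃ k : ℤ, ClanEquiv c (clanZ k) := by
  rcases h.one_one_cases with ⟨h₁, h₂⟩ | ⟨h₁, h₂⟩ | ⟨m₁, m₂, h₁, h₂⟩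
  · have hc : c = clanPM := funext fun i => by
      rw [h.one_one_apply i, h₁, h₂, clanPM]; split_ifs <;> rfl
    exact .inl (hc ▸ clanEquiv_refl c)
  · have hc : c = clanMP := funext fun i => by
      rw [h.one_one_apply i, h₁, h₂, clanMP]; split_ifs <;> rfl
    exact .inr (.inl (hc ▸ clanEquiv_refl c))
  · obtain ⟨k, rfl⟩ := h.one_one_eq_shift_clanZ h₁ h₂
    exact .inr (.inr ⟨k, clanEquiv_shift _ _⟩)

end IsAffineClan

theorem isAffineClan_clanPM : IsAffineClan 1 1 clanPM := by
  refine ⟨fun i k m h => ?_, fun i s h => ?_, ?_, fun m i h => ?_⟩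
  · unfold clanPM at h; split_ifs at h
  · unfold clanPM at h ⊢; rwa [show (i + ((1 : ℕ) + (1 : ℕ))) % 2 = i % 2 by push_cast; omega]
  · rw [Icc_one_one_add_one]; decide
  · unfold clanPM at h; split_ifs at h

theorem isAffineClan_clanMP : IsAffineClan 1 1 clanMP := by
  refine ⟨fun i k m h => ?_, fun i s h => ?_, ?_, fun m i h => ?_⟩
  · unfold clanMP at h; split_ifs at h
  · unfold clanMP at h ⊢; rwa [show (i + ((1 : ℕ) + (1 : ℕ))) % 2 = i % 2 by push_cast; omega]
  · rw [Icc_one_one_add_one]; decide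
  · unfold clanMP at h; split_ifs at h

theorem isAffineClan_clanZ (k : ℤ) : IsAffineClan 1 1 (clanZ k) := by
  refine ⟨fun i t m h => ?_, fun i s h => ?_, ?_, fun m i h => ?_⟩
  · unfold clanZ at h ⊢
    push_cast
    split_ifs at h ⊢ <;> simp only [Sum.inl.injEq] at h ⊢ <;> omega
  · unfold clanZ at h; split_ifs at h
  · rw [Icc_one_one_add_one]; simp [clanZ, ite_eq_iff]
  · refine ⟨if i % 2 = 1 then i + 1 - 2 * k else i - 1 + 2 * k, ?_, ?_, fun j hj => ?_⟩ <;>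
      unfold clanZ at * <;> split_ifs at * <;> simp only [Sum.inl.injEq] at * <;> omega

theorem not_clanEquiv_clanPM_clanMP : ¬ ClanEquiv clanPM clanMP := fun h => by
  simpa [clanPM, clanMP] using h.1 1

theorem not_clanEquiv_clanPM_clanZ (k : ℤ) : ¬ ClanEquiv clanPM (clanZ k) := fun h => by
  simpa [clanPM, clanZ] using h.1 1

theorem not_clanEquiv_clanMP_clanZ (k : ℤ) : ¬ ClanEquiv clanMP (clanZ k) := fun h => by
  simpa [clanMP, clanZ] using h.2.1 1

theorem ClanEquiv.clanZ_injective {k k' : ℤ} (h : ClanEquiv (clanZ k) (clanZ k')) : k = k' := by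
  obtain ⟨m, h₁, h₂⟩ := (h.2.2 1 (2 - 2 * k) (by omega)).mp
    ⟨1, by simp [clanZ], by simp only [clanZ]; rw [if_neg (by omega)]; congr 1; ring⟩
  simp only [clanZ] at h₁ h₂
  rw [if_neg (by omega)] at h₂
  simp only [Int.reduceMod, if_true, Sum.inl.injEq] at h₁ h₂
  omega

/-- The affine `(1,1)`-clans are exactly `(+,−)`, `(−,+)`, and
`(1, 1+2k)` for `k ∈ ℤ`, and these are pairwise inequivalent; so the set of
equivalence classes is in bijection with `ℤ ⊔ {two points}` (countably infinite). -/
theorem affine_one_one_clan_classification :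
    (IsAffineClan 1 1 clanPM ∧ IsAffineClan 1 1 clanMP ∧ ∀ k : ℤ, IsAffineClan 1 1 (clanZ k)) ∧
    (∀ c : ℤ → ClanEntry, IsAffineClan 1 1 c →
      ClanEquiv c clanPM ∨ ClanEquiv c clanMP ∨ ∃ k : ℤ, ClanEquiv c (clanZ k)) ∧
    ¬ ClanEquiv clanPM clanMP ∧
    (∀ k : ℤ, ¬ ClanEquiv clanPM (clanZ k)) ∧
    (∀ k : ℤ, ¬ ClanEquiv clanMP (clanZ k)) ∧
    (∀ k k' : ℤ, ClanEquiv (clanZ k) (clanZ k') → k = k') :=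
  ⟨⟨isAffineClan_clanPM, isAffineClan_clanMP, isAffineClan_clanZ⟩,
    fun _ h => h.one_one_classification, not_clanEquiv_clanPM_clanMP, not_clanEquiv_clanPM_clanZ,
    not_clanEquiv_clanMP_clanZ, fun _ _ h => h.clanZ_injective⟩
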